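/- arXiv:2202.03787 — 5 statements merged into one kernel-verified Lean document; each statement's English description precedes it below -/
import Mathlib

section
/- For all real numbers a, b > 0, one has (a − b)(log a − log b) ≥ 4(√a − √b)². -/
/-!
With `a = s ^ 2` and `b = t ^ 2` the inequality reads `2 (s - t) ^ 2 ≤ (s ^ 2 - t ^ 2) (log s - log t)`,
which is homogeneous and so reduces to `t = 1`. There it says that `log x - 2 (x - 1) / (x + 1)` has
the sign of `x - 1`; this function vanishes at `1` and is monotone, its derivative being
`(x - 1) ^ 2 / (x (x + 1) ^ 2)`.
-/

open Real Set

lemma monotoneOn_log_sub_two_mul_sub_one_div_add_one :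
    MonotoneOn (fun x : ℝ => log x - 2 * (x - 1) / (x + 1)) (Ioi 0) := by
  have hderiv : ∀ x ∈ Ioi (0 : ℝ), HasDerivAt (fun x : ℝ => log x - 2 * (x - 1) / (x + 1))
      ((x - 1) ^ 2 / (x * (x + 1) ^ 2)) x := by
    intro x (hx : 0 < x)
    have hquot := (((hasDerivAt_id x).sub_const 1).const_mul 2).div
      ((hasDerivAt_id x).add_const 1) (by positivity : x + 1 ≠ 0)
    refine ((hasDerivAt_log hx.ne').sub hquot).congr_deriv ?_
    simp only [id]
    field_simp
    ring
  refine monotoneOn_of_hasDerivWithinAt_nonneg (f' := fun x => (x - 1) ^ 2 / (x * (x + 1) ^ 2))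
    (convex_Ioi 0)
    (fun x hx => (hderiv x hx).continuousAt.continuousWithinAt) (fun x hx => ?_) (fun x hx => ?_)
    <;> simp only [interior_Ioi, mem_Ioi] at hx ⊢
  · exact (hderiv x hx).hasDerivWithinAt
  · positivity

lemma two_mul_sub_one_sq_le_sq_sub_one_mul_log {x : ℝ} (hx : 0 < x) :
    2 * (x - 1) ^ 2 ≤ (x ^ 2 - 1) * log x := by
  have hmono := monotoneOn_log_sub_two_mul_sub_one_div_add_one
  have h1 : (1 : ℝ) ∈ Ioi 0 := mem_Ioi.2 one_pos
  have hsign : 0 ≤ (x - 1) * (log x - 2 * (x - 1) / (x + 1)) := by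
    rcases le_total x 1 with h | h
    · exact mul_nonneg_of_nonpos_of_nonpos (by linarith) (by simpa using hmono hx h1 h)
    · exact mul_nonneg (by linarith) (by simpa using hmono h1 hx h)
  have hx1 : 0 < x + 1 := by linarith
  have hexpand : (x + 1) * ((x - 1) * (log x - 2 * (x - 1) / (x + 1)))
      = (x ^ 2 - 1) * log x - 2 * (x - 1) ^ 2 := by
    field_simp
    ring
  linarith [mul_nonneg hx1.le hsign]

lemma two_mul_sub_sq_le_sq_sub_sq_mul_log_sub {s t : ℝ} (hs : 0 < s) (ht : 0 < t) :
    2 * (s - t) ^ 2 ≤ (s ^ 2 - t ^ 2) * (log s - log t) := by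
  have h := two_mul_sub_one_sq_le_sq_sub_one_mul_log (div_pos hs ht)
  rw [log_div hs.ne' ht.ne'] at h
  calc 2 * (s - t) ^ 2 = t ^ 2 * (2 * (s / t - 1) ^ 2) := by field_simp
    _ ≤ t ^ 2 * (((s / t) ^ 2 - 1) * (log s - log t)) := by gcongr
    _ = (s ^ 2 - t ^ 2) * (log s - log t) := by field_simp

theorem stmt_0 (a b : ℝ) (ha : 0 < a) (hb : 0 < b) :
    (a - b) * (Real.log a - Real.log b) ≥ 4 * (Real.sqrt a - Real.sqrt b) ^ 2 := by
  have h := two_mul_sub_sq_le_sq_sub_sq_mul_log_sub (sqrt_pos.2 ha) (sqrt_pos.2 hb)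
  rw [sq_sqrt ha.le, sq_sqrt hb.le, log_sqrt ha.le, log_sqrt hb.le] at h
  linarith
end

section
/- Let d ≥ 1 be an integer, s ∈ (0,1), and let u : ℝ^d → ℝ be measurable with u(x) > 0 for almost every x. Then, as integrals with values in [0, ∞], ∫∫_{ℝ^d × ℝ^d} (u(x) − u(y))(log u(x) − log u(y)) / |x − y|^{d + 2s} dx dy ≥ 4 ∫∫_{ℝ^d × ℝ^d} (√(u(x)) − √(u(y)))² / |x − y|^{d + 2s} dx dy. -/
/-!
The inequality holds pointwise on the product. Writing `p = √a`, `q = √b` and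
`x = (p - q) / (p + q)`, so that `(1 + x) / (1 - x) = p / q`, it reduces to
`2 x² ≤ x (log (1 + x) - log (1 - x))`; this follows from the series
`log (1 + x) - log (1 - x) = 2 ∑ x^(2k+1) / (2k+1)`, whose terms become nonnegative
after multiplication by `x`, the first one being `2 x²`.
-/

open MeasureTheory Real

lemma two_mul_sq_le_mul_log_sub_log {x : ℝ} (hx : |x| < 1) :
    2 * x ^ 2 ≤ x * (log (1 + x) - log (1 - x)) := by
  have hsum := (hasSum_log_sub_log_of_abs_lt_one hx).mul_left x
  have hterm (k : ℕ) : x * (2 * (1 / (2 * k + 1)) * x ^ (2 * k + 1)) =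
      2 / (2 * k + 1) * (x ^ 2) ^ (k + 1) := by
    ring
  calc 2 * x ^ 2 = x * (2 * (1 / (2 * ((0 : ℕ) : ℝ) + 1)) * x ^ (2 * 0 + 1)) := by norm_num; ring
    _ ≤ _ := le_hasSum hsum 0 fun k _ => by rw [hterm]; positivity

lemma two_mul_sq_sub_le_sq_sub_sq_mul_log_sub_log {p q : ℝ} (hp : 0 < p) (hq : 0 < q) :
    2 * (p - q) ^ 2 ≤ (p ^ 2 - q ^ 2) * (log p - log q) := by
  set x := (p - q) / (p + q) with hx_def
  have hx : |x| < 1 := by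
    rw [abs_div, abs_of_pos (by positivity : 0 < p + q), div_lt_one (by positivity), abs_lt]
    constructor <;> linarith
  have hlog : log (1 + x) - log (1 - x) = log p - log q := by
    have h1 : 1 + x = 2 * p / (p + q) := by rw [hx_def]; field_simp; ring
    have h2 : 1 - x = 2 * q / (p + q) := by rw [hx_def]; field_simp; ring
    rw [h1, h2, log_div, log_div, log_mul, log_mul] <;> first | positivity | ring
  have hkey := two_mul_sq_le_mul_log_sub_log hx
  rw [hlog] at hkey
  calc 2 * (p - q) ^ 2 = (p + q) ^ 2 * (2 * x ^ 2) := by rw [hx_def]; field_simp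
    _ ≤ (p + q) ^ 2 * (x * (log p - log q)) := by gcongr
    _ = (p ^ 2 - q ^ 2) * (log p - log q) := by rw [hx_def]; field_simp; ring

lemma four_mul_sq_sqrt_sub_sqrt_le_mul_log_sub_log {a b : ℝ} (ha : 0 < a) (hb : 0 < b) :
    4 * (√a - √b) ^ 2 ≤ (a - b) * (log a - log b) := by
  have h := two_mul_sq_sub_le_sq_sub_sq_mul_log_sub_log (sqrt_pos.2 ha) (sqrt_pos.2 hb)
  rw [sq_sqrt ha.le, sq_sqrt hb.le, log_sqrt ha.le, log_sqrt hb.le] at h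
  linarith

lemma ofReal_div_le_ofReal_div {a b : ℝ} (hab : a ≤ b) (ha : 0 ≤ a) (w : ℝ) :
    ENNReal.ofReal (a / w) ≤ ENNReal.ofReal (b / w) := by
  rcases le_or_gt 0 w with hw | hw
  · exact ENNReal.ofReal_le_ofReal (div_le_div_of_nonneg_right hab hw)
  · rw [ENNReal.ofReal_of_nonpos (div_nonpos_of_nonneg_of_nonpos ha hw.le)]
    exact zero_le

theorem four_mul_lintegral_sq_sqrt_sub_le_lintegral_mul_log_sub {α : Type*} [MeasurableSpace α]
    {μ : Measure α} {u : α → ℝ} (hu : ∀ᵐ x ∂μ, 0 < u x) (w : α × α → ℝ) :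
    4 * ∫⁻ p, ENNReal.ofReal ((√(u p.1) - √(u p.2)) ^ 2 / w p) ∂μ.prod μ ≤
      ∫⁻ p, ENNReal.ofReal ((u p.1 - u p.2) * (log (u p.1) - log (u p.2)) / w p) ∂μ.prod μ := by
  rw [← lintegral_const_mul' _ _ ENNReal.ofNat_ne_top]
  refine lintegral_mono_ae ?_
  filter_upwards [Measure.quasiMeasurePreserving_fst.ae hu, Measure.quasiMeasurePreserving_snd.ae hu]
    with p hp₁ hp₂
  rw [← ENNReal.ofReal_ofNat, ← ENNReal.ofReal_mul zero_le_four, ← mul_div_assoc]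
  exact ofReal_div_le_ofReal_div (four_mul_sq_sqrt_sub_sqrt_le_mul_log_sub_log hp₁ hp₂) (by positivity) _

theorem stmt_2_general (d : ℕ) (s : ℝ)
    (u : EuclideanSpace ℝ (Fin d) → ℝ)
    (hpos : ∀ᵐ x ∂(volume : Measure (EuclideanSpace ℝ (Fin d))), 0 < u x) :
    4 * ∫⁻ p : EuclideanSpace ℝ (Fin d) × EuclideanSpace ℝ (Fin d),
        ENNReal.ofReal ((Real.sqrt (u p.1) - Real.sqrt (u p.2)) ^ 2 / ‖p.1 - p.2‖ ^ ((d : ℝ) + 2 * s))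
      ≤ ∫⁻ p : EuclideanSpace ℝ (Fin d) × EuclideanSpace ℝ (Fin d),
        ENNReal.ofReal ((u p.1 - u p.2) * (Real.log (u p.1) - Real.log (u p.2)) / ‖p.1 - p.2‖ ^ ((d : ℝ) + 2 * s)) :=
  four_mul_lintegral_sq_sqrt_sub_le_lintegral_mul_log_sub hpos _

theorem stmt_2 (d : ℕ) (hd : 1 ≤ d) (s : ℝ) (hs0 : 0 < s) (hs1 : s < 1)
    (u : EuclideanSpace ℝ (Fin d) → ℝ) (hu : Measurable u)
    (hpos : ∀ᵐ x ∂(volume : Measure (EuclideanSpace ℝ (Fin d))), 0 < u x) :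
    4 * ∫⁻ p : EuclideanSpace ℝ (Fin d) × EuclideanSpace ℝ (Fin d),
        ENNReal.ofReal ((Real.sqrt (u p.1) - Real.sqrt (u p.2)) ^ 2 / ‖p.1 - p.2‖ ^ ((d : ℝ) + 2 * s))
      ≤ ∫⁻ p : EuclideanSpace ℝ (Fin d) × EuclideanSpace ℝ (Fin d),
        ENNReal.ofReal ((u p.1 - u p.2) * (Real.log (u p.1) - Real.log (u p.2)) / ‖p.1 - p.2‖ ^ ((d : ℝ) + 2 * s)) :=
  stmt_2_general d s u hpos
end

section
/- Let d ≥ 1 be an integer, α ∈ (0,1), and 0 < m < min{1, 2α}. For x, y ∈ ℝ^d set Φ_x(y) := (1 + |x+y|²)^{m/2} + (1 + |x−y|²)^{m/2} − 2(1 + |x|²)^{m/2}. Then there exists a constant C > 0 such that for every x ∈ ℝ^d, the function y ↦ Φ_x(y)/|y|^{d+2α} is Lebesgue integrable on ℝ^d and |∫_{ℝ^d} Φ_x(y) |y|^{−d−2α} dy| ≤ C (1 + |x|²)^{m/2}. -/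
/-!
Write `⟨z⟩ = (1 + ‖z‖²)^(1/2)`. Along the line `t ↦ x + t • y` the weight `⟨x + t • y⟩^m` is the
`m/2`-th power of a quadratic `q(t) ≥ 1` whose discriminant is controlled by Cauchy–Schwarz, and
its second derivative is at most `2m‖y‖²` in absolute value; this bounds the second difference
`Φ_x(y)` by `2m‖y‖²`. For `‖y‖ ≥ 1` each term of `Φ_x(y)` is at most `4⟨x⟩^m ‖y‖^m`. Hence
`|Φ_x(y)| ‖y‖^(-d-2α) ≤ 10⟨x⟩^m K(y)`, where `K(y) = ‖y‖^(2-d-2α)` on the unit ball and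
`‖y‖^(m-d-2α)` outside it; `K` is integrable because `α < 1` and `m < 2α`.
-/

open MeasureTheory Metric Module Set

theorem abs_add_add_sub_two_mul_le_of_abs_deriv2_le {g g' g'' : ℝ → ℝ} {M : ℝ}
    (hg : ∀ t, HasDerivAt g (g' t) t) (hg' : ∀ t, HasDerivAt g' (g'' t) t)
    (hg'' : ∀ t, |g'' t| ≤ M) (a : ℝ) {h : ℝ} (hh : 0 ≤ h) :
    |g (a + h) + g (a - h) - 2 * g a| ≤ M * h ^ 2 := by
  have hlip : ∀ s t, |g' s - g' t| ≤ M * |s - t| := fun s t => by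
    simpa only [Real.norm_eq_abs] using convex_univ.norm_image_sub_le_of_norm_hasDerivWithin_le
      (fun t _ => (hg' t).hasDerivWithinAt) (fun t _ => hg'' t) (mem_univ t) (mem_univ s)
  have hf : ∀ t, HasDerivAt (fun t => g (a + t) + g (a - t) - 2 * g a)
      (g' (a + t) - g' (a - t)) t := fun t => by
    have hp := (hg (a + t)).comp t ((hasDerivAt_id t).const_add a)
    have hn := (hg (a - t)).comp t ((hasDerivAt_id t).const_sub a)
    simpa [sub_eq_add_neg] using (hp.add hn).sub_const (2 * g a)
  have hB : ∀ t, HasDerivAt (fun t => M * t ^ 2) (2 * M * t) t := fun t => by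
    simpa [mul_comm, mul_left_comm] using (hasDerivAt_pow 2 t).const_mul M
  refine image_norm_le_of_norm_deriv_right_le_deriv_boundary (a := 0) (b := h)
    (fun t _ => (hf t).continuousAt.continuousWithinAt) (fun t _ => (hf t).hasDerivWithinAt)
    (by simp [two_mul]) hB (fun t ht => ?_) (right_mem_Icc.2 hh)
  calc ‖g' (a + t) - g' (a - t)‖ ≤ M * |a + t - (a - t)| := hlip _ _
    _ = 2 * M * t := by
      rw [show a + t - (a - t) = 2 * t by ring, abs_of_nonneg (by linarith [ht.1])]
      ring

theorem hasDerivAt_one_add_quadratic_rpow (p a b c t : ℝ) (hq : 0 < 1 + a + 2 * b * t + c * t ^ 2) :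
    HasDerivAt (fun t => (1 + a + 2 * b * t + c * t ^ 2) ^ p)
      (2 * p * (b + c * t) * (1 + a + 2 * b * t + c * t ^ 2) ^ (p - 1)) t := by
  have h : HasDerivAt (fun t => 1 + a + 2 * b * t + c * t ^ 2) (2 * (b + c * t)) t :=
    ((((hasDerivAt_id' t).const_mul (2 * b)).const_add (1 + a)).fun_add
      ((hasDerivAt_pow 2 t).const_mul c)).congr_deriv (by push_cast; ring)
  exact (h.rpow_const (p := p) (Or.inl hq.ne')).congr_deriv (by ring)

/-- `B = q'/2` and `c = q''/2` for a quadratic `q ≥ 1`; the left side is `|(q ^ (m / 2))''|`. -/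
theorem abs_deriv2_one_add_quadratic_rpow_le {m c B Q : ℝ} (hm0 : 0 ≤ m) (hm2 : m ≤ 2) (hc : 0 ≤ c)
    (hQ : 1 ≤ Q) (hB : B ^ 2 ≤ c * Q) :
    |m * c * Q ^ (m / 2 - 1) - m * (2 - m) * B ^ 2 * Q ^ (m / 2 - 2)| ≤ 2 * m * c := by
  have hP0 : 0 ≤ Q ^ (m / 2 - 1) := Real.rpow_nonneg (by linarith) _
  have hP1 : Q ^ (m / 2 - 1) ≤ 1 := Real.rpow_le_one_of_one_le_of_nonpos hQ (by linarith)
  have hsplit : Q ^ (m / 2 - 1) = Q * Q ^ (m / 2 - 2) := by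
    rw [show m / 2 - 1 = 1 + (m / 2 - 2) by ring, Real.rpow_add (by linarith), Real.rpow_one]
  have hR0 : 0 ≤ Q ^ (m / 2 - 2) := Real.rpow_nonneg (by linarith) _
  have hBR : B ^ 2 * Q ^ (m / 2 - 2) ≤ c * Q ^ (m / 2 - 1) := by
    rw [hsplit, ← mul_assoc]; exact mul_le_mul_of_nonneg_right hB hR0
  have hmc : 0 ≤ m * c := mul_nonneg hm0 hc
  have hm2' : 0 ≤ m * (2 - m) := mul_nonneg hm0 (by linarith)
  rw [abs_le]
  constructor <;> nlinarith [mul_nonneg (sq_nonneg B) hR0, mul_nonneg hmc hP0,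
    mul_le_mul_of_nonneg_left hP1 hmc, mul_le_mul_of_nonneg_left hBR hm2',
    mul_nonneg hm2' (mul_nonneg (sq_nonneg B) hR0)]

noncomputable def bracketSecondDiff {E : Type*} [SeminormedAddCommGroup E] (m : ℝ) (x y : E) : ℝ :=
  (1 + ‖x + y‖ ^ 2) ^ (m / 2) + (1 + ‖x - y‖ ^ 2) ^ (m / 2) - 2 * (1 + ‖x‖ ^ 2) ^ (m / 2)

section Seminormed

variable {E : Type*} [SeminormedAddCommGroup E] {m : ℝ}

theorem one_add_sq_rpow_le_of_norm_le_add (hm0 : 0 ≤ m) (hm2 : m ≤ 2) {x y z : E}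
    (hz : ‖z‖ ≤ ‖x‖ + ‖y‖) (hy : 1 ≤ ‖y‖) :
    (1 + ‖z‖ ^ 2) ^ (m / 2) ≤ 4 * (1 + ‖x‖ ^ 2) ^ (m / 2) * ‖y‖ ^ m := by
  have hsq : 1 + ‖z‖ ^ 2 ≤ 4 * (1 + ‖x‖ ^ 2) * ‖y‖ ^ 2 := by
    have hz2 : ‖z‖ ^ 2 ≤ (‖x‖ + ‖y‖) ^ 2 := pow_le_pow_left₀ (norm_nonneg _) hz 2
    have hy2 : 1 ≤ ‖y‖ ^ 2 := one_le_pow₀ hy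
    nlinarith [sq_nonneg (‖x‖ - ‖y‖), mul_le_mul_of_nonneg_left hy2 (sq_nonneg ‖x‖)]
  have h4 : (4 : ℝ) ^ (m / 2) ≤ 4 := Real.rpow_le_self_of_one_le (by norm_num) (by linarith)
  calc (1 + ‖z‖ ^ 2) ^ (m / 2) ≤ (4 * (1 + ‖x‖ ^ 2) * ‖y‖ ^ 2) ^ (m / 2) :=
        Real.rpow_le_rpow (by positivity) hsq (by linarith)
    _ = 4 ^ (m / 2) * (1 + ‖x‖ ^ 2) ^ (m / 2) * ‖y‖ ^ m := by
        rw [Real.mul_rpow (by positivity) (by positivity),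
          Real.mul_rpow (by positivity) (by positivity), ← Real.rpow_natCast ‖y‖ 2,
          ← Real.rpow_mul (norm_nonneg y)]
        ring_nf
    _ ≤ 4 * (1 + ‖x‖ ^ 2) ^ (m / 2) * ‖y‖ ^ m := by gcongr

theorem abs_bracketSecondDiff_le_rpow (hm0 : 0 ≤ m) (hm2 : m ≤ 2) (x : E) {y : E}
    (hy : 1 ≤ ‖y‖) :
    |bracketSecondDiff m x y| ≤ 10 * (1 + ‖x‖ ^ 2) ^ (m / 2) * ‖y‖ ^ m := by
  have hplus := one_add_sq_rpow_le_of_norm_le_add hm0 hm2 (norm_add_le x y) hy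
  have hminus := one_add_sq_rpow_le_of_norm_le_add hm0 hm2 (norm_sub_le x y) hy
  have hx : (1 + ‖x‖ ^ 2) ^ (m / 2) ≤ (1 + ‖x‖ ^ 2) ^ (m / 2) * ‖y‖ ^ m :=
    le_mul_of_one_le_right (by positivity) (Real.one_le_rpow hy hm0)
  have : 0 ≤ (1 + ‖x + y‖ ^ 2) ^ (m / 2) := by positivity
  have : 0 ≤ (1 + ‖x - y‖ ^ 2) ^ (m / 2) := by positivity
  have : 0 ≤ (1 + ‖x‖ ^ 2) ^ (m / 2) := by positivity
  rw [bracketSecondDiff, abs_le]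
  constructor <;> linarith

end Seminormed

section InnerProductSpace

variable {E : Type*} [NormedAddCommGroup E] [InnerProductSpace ℝ E]

theorem abs_bracketSecondDiff_le_sq {m : ℝ} (hm0 : 0 ≤ m) (hm2 : m ≤ 2) (x y : E) :
    |bracketSecondDiff m x y| ≤ 2 * m * ‖y‖ ^ 2 := by
  rw [bracketSecondDiff]
  set a := ‖x‖ ^ 2
  set b := inner ℝ x y
  set c := ‖y‖ ^ 2
  set q : ℝ → ℝ := fun t => 1 + a + 2 * b * t + c * t ^ 2 with hq
  have hnorm : ∀ t : ℝ, ‖x + t • y‖ ^ 2 = a + 2 * b * t + c * t ^ 2 := fun t => by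
    rw [norm_add_sq_real, norm_smul, inner_smul_right, Real.norm_eq_abs, mul_pow, sq_abs]
    ring
  have hq1 : ∀ t, 1 ≤ q t := fun t => by
    have := hnorm t
    simp only [hq]
    nlinarith [sq_nonneg ‖x + t • y‖]
  have hbc : b ^ 2 ≤ a * c := by
    have := real_inner_mul_inner_self_le x y
    rw [real_inner_self_eq_norm_sq, real_inner_self_eq_norm_sq] at this
    nlinarith
  have hg : ∀ t, HasDerivAt (fun t => q t ^ (m / 2)) (m * (b + c * t) * q t ^ (m / 2 - 1)) t :=
    fun t => (hasDerivAt_one_add_quadratic_rpow _ a b c t (by linarith [hq1 t])).congr_deriv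
      (by ring)
  have hg' : ∀ t, HasDerivAt (fun t => m * (b + c * t) * q t ^ (m / 2 - 1))
      (m * c * q t ^ (m / 2 - 1) - m * (2 - m) * (b + c * t) ^ 2 * q t ^ (m / 2 - 2)) t :=
    fun t => ((((hasDerivAt_id' t).const_mul c).const_add b).const_mul m |>.mul
      (hasDerivAt_one_add_quadratic_rpow _ a b c t (by linarith [hq1 t]))).congr_deriv
      (by rw [show m / 2 - 1 - 1 = m / 2 - 2 by ring]; ring)
  have hg'' : ∀ t, |m * c * q t ^ (m / 2 - 1) - m * (2 - m) * (b + c * t) ^ 2 * q t ^ (m / 2 - 2)|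
      ≤ 2 * m * c := fun t =>
    abs_deriv2_one_add_quadratic_rpow_le hm0 hm2 (sq_nonneg _) (hq1 t)
      (by simp only [hq]; nlinarith [sq_nonneg ‖y‖])
  have := abs_add_add_sub_two_mul_le_of_abs_deriv2_le hg hg' hg'' 0 zero_le_one
  have h1 : ‖x + y‖ ^ 2 = a + 2 * b + c := by simpa using hnorm 1
  have h2 : ‖x - y‖ ^ 2 = a - 2 * b + c := by simpa [← sub_eq_add_neg] using hnorm (-1)
  simp only [hq, zero_add, zero_sub, mul_one, mul_neg_one, one_pow, neg_one_sq, mul_zero,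
    add_zero, zero_pow two_ne_zero] at this
  rw [h1, h2]
  convert this using 5 <;> ring

open scoped Classical in
theorem abs_bracketSecondDiff_mul_rpow_le {m : ℝ} (hm0 : 0 ≤ m) (hm2 : m ≤ 2) (x y : E) (β : ℝ) :
    |bracketSecondDiff m x y * ‖y‖ ^ β| ≤ 10 * (1 + ‖x‖ ^ 2) ^ (m / 2) *
      (ball (0 : E) 1).piecewise (fun y => ‖y‖ ^ (2 + β)) (fun y => ‖y‖ ^ (m + β)) y := by
  have hw : 1 ≤ (1 + ‖x‖ ^ 2) ^ (m / 2) := Real.one_le_rpow (by nlinarith) (by positivity)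
  rcases eq_or_ne y 0 with rfl | hy0
  · have h0 : bracketSecondDiff m x 0 = 0 := by
      simp only [bracketSecondDiff, add_zero, sub_zero]; ring
    rw [h0, zero_mul, abs_zero, piecewise_eq_of_mem _ _ _ (mem_ball_self one_pos)]
    positivity
  have hy : 0 < ‖y‖ := norm_pos_iff.2 hy0
  rw [abs_mul, abs_of_nonneg (a := ‖y‖ ^ β) (by positivity)]
  by_cases hball : y ∈ ball (0 : E) 1
  · rw [piecewise_eq_of_mem _ _ _ hball, Real.rpow_add hy, Real.rpow_two]
    calc |bracketSecondDiff m x y| * ‖y‖ ^ β ≤ 2 * m * ‖y‖ ^ 2 * ‖y‖ ^ β := by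
          gcongr; exact abs_bracketSecondDiff_le_sq hm0 hm2 x y
      _ ≤ 10 * (1 + ‖x‖ ^ 2) ^ (m / 2) * (‖y‖ ^ 2 * ‖y‖ ^ β) := by
          rw [← mul_assoc]
          exact mul_le_mul_of_nonneg_right
            (mul_le_mul_of_nonneg_right (by linarith) (sq_nonneg _)) (by positivity)
  · rw [piecewise_eq_of_notMem _ _ _ hball, Real.rpow_add hy, ← mul_assoc]
    gcongr
    exact abs_bracketSecondDiff_le_rpow hm0 hm2 x (by simpa using hball)

end InnerProductSpace

section Integrability

variable {E : Type*} [NormedAddCommGroup E] [NormedSpace ℝ E] [FiniteDimensional ℝ E]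
  [MeasurableSpace E] [BorelSpace E] {μ : Measure E} [μ.IsAddHaarMeasure]

theorem integrableOn_compl_ball_rpow {r t : ℝ} (hr : 0 < r) (ht : t < -(finrank ℝ E : ℝ)) :
    IntegrableOn (fun x : E => ‖x‖ ^ t) (ball 0 r)ᶜ μ := by
  have hmaj : Integrable (fun x : E => (1 + r⁻¹) ^ (-t) * (1 + ‖x‖) ^ (-(-t))) μ :=
    (integrable_one_add_norm (by linarith)).const_mul _
  refine hmaj.integrableOn.mono' (measurable_norm.pow_const t).aestronglyMeasurable
    ((ae_restrict_iff' measurableSet_ball.compl).2 (.of_forall fun x hx => ?_))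
  have hxr : r ≤ ‖x‖ := by simpa using hx
  have hx0 : 0 < ‖x‖ := hr.trans_le hxr
  have hbr : 0 < 1 + r⁻¹ := by positivity
  have hle : 1 + ‖x‖ ≤ (1 + r⁻¹) * ‖x‖ := by
    have : 1 ≤ r⁻¹ * ‖x‖ := by rwa [inv_mul_eq_div, one_le_div hr]
    linarith
  rw [Real.norm_of_nonneg (by positivity), neg_neg]
  calc ‖x‖ ^ t = (1 + r⁻¹) ^ (-t) * ((1 + r⁻¹) * ‖x‖) ^ t := by
        rw [Real.mul_rpow hbr.le hx0.le, ← mul_assoc, ← Real.rpow_add hbr, neg_add_cancel,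
          Real.rpow_zero, one_mul]
    _ ≤ (1 + r⁻¹) ^ (-t) * (1 + ‖x‖) ^ t := by
        have ht0 : t ≤ 0 := by linarith [(Nat.cast_nonneg _ : (0 : ℝ) ≤ finrank ℝ E)]
        exact mul_le_mul_of_nonneg_left (Real.rpow_le_rpow_of_nonpos (by positivity) hle ht0)
          (by positivity)

open scoped Classical in
theorem integrable_piecewise_ball_rpow (hd : 1 ≤ finrank ℝ E) {r s t : ℝ} (hr : 0 < r)
    (hs : -(finrank ℝ E : ℝ) < s) (ht : t < -(finrank ℝ E : ℝ)) :
    Integrable ((ball (0 : E) r).piecewise (fun x => ‖x‖ ^ s) (fun x => ‖x‖ ^ t)) μ := by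
  refine Integrable.piecewise measurableSet_ball ?_ (integrableOn_compl_ball_rpow hr ht)
  refine integrableOn_ball_of_norm_le_rpow hd (C := 1) (α := -s) (by linarith)
    (.of_forall fun x => ?_) (measurable_norm.pow_const s).aestronglyMeasurable
  rw [one_mul, neg_neg, Real.norm_of_nonneg (by positivity)]

end Integrability

theorem stmt_5_general (d : ℕ) (hd : 1 ≤ d) (α : ℝ) (hα1 : α < 1)
    (m : ℝ) (hm0 : 0 < m) (hm : m < min 1 (2 * α)) :
    ∃ C : ℝ, 0 < C ∧ ∀ x : EuclideanSpace ℝ (Fin d),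
      Integrable (fun y : EuclideanSpace ℝ (Fin d) =>
        ((1 + ‖x + y‖ ^ 2) ^ (m / 2) + (1 + ‖x - y‖ ^ 2) ^ (m / 2)
          - 2 * (1 + ‖x‖ ^ 2) ^ (m / 2)) / ‖y‖ ^ ((d : ℝ) + 2 * α)) ∧
      |∫ y : EuclideanSpace ℝ (Fin d),
        ((1 + ‖x + y‖ ^ 2) ^ (m / 2) + (1 + ‖x - y‖ ^ 2) ^ (m / 2)
          - 2 * (1 + ‖x‖ ^ 2) ^ (m / 2)) * ‖y‖ ^ (-(d : ℝ) - 2 * α)|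
        ≤ C * (1 + ‖x‖ ^ 2) ^ (m / 2) := by
  classical
  have hm2α : m < 2 * α := hm.trans_le (min_le_right _ _)
  have hdim : finrank ℝ (EuclideanSpace ℝ (Fin d)) = d := finrank_euclideanSpace_fin
  set β : ℝ := -(d : ℝ) - 2 * α
  set K := (ball (0 : EuclideanSpace ℝ (Fin d)) 1).piecewise
    (fun y => ‖y‖ ^ (2 + β)) (fun y => ‖y‖ ^ (m + β))
  have hK : Integrable K :=
    integrable_piecewise_ball_rpow (hdim.symm ▸ hd) one_pos (by rw [hdim]; linarith)
      (by rw [hdim]; linarith)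
  have hK0 : 0 ≤ ∫ y, K y := integral_nonneg fun y => by
    unfold K Set.piecewise; split_ifs <;> positivity
  refine ⟨10 * (∫ y, K y) + 1, by linarith, fun x => ?_⟩
  set w := (1 + ‖x‖ ^ 2) ^ (m / 2)
  have hw : 1 ≤ w := Real.one_le_rpow (by nlinarith) (by positivity)
  have hbound : ∀ y, ‖bracketSecondDiff m x y * ‖y‖ ^ β‖ ≤ 10 * w * K y := fun y =>
    abs_bracketSecondDiff_mul_rpow_le hm0.le (by linarith) x y β
  have hint : Integrable (fun y => bracketSecondDiff m x y * ‖y‖ ^ β) :=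
    (hK.const_mul (10 * w)).mono' (by unfold bracketSecondDiff; fun_prop) (.of_forall hbound)
  refine ⟨?_, ?_⟩
  · refine hint.congr (.of_forall fun y => ?_)
    dsimp only
    rw [div_eq_mul_inv, ← Real.rpow_neg (norm_nonneg y), neg_add']
    rfl
  · calc |∫ y, bracketSecondDiff m x y * ‖y‖ ^ β|
        ≤ ∫ y, 10 * w * K y := norm_integral_le_of_norm_le (hK.const_mul _) (.of_forall hbound)
      _ = 10 * w * ∫ y, K y := integral_const_mul _ _
      _ ≤ (10 * (∫ y, K y) + 1) * w := by linarith [mul_comm w (∫ y, K y)]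

theorem stmt_5 (d : ℕ) (hd : 1 ≤ d) (α : ℝ) (hα0 : 0 < α) (hα1 : α < 1)
    (m : ℝ) (hm0 : 0 < m) (hm : m < min 1 (2 * α)) :
    ∃ C : ℝ, 0 < C ∧ ∀ x : EuclideanSpace ℝ (Fin d),
      Integrable (fun y : EuclideanSpace ℝ (Fin d) =>
        ((1 + ‖x + y‖ ^ 2) ^ (m / 2) + (1 + ‖x - y‖ ^ 2) ^ (m / 2)
          - 2 * (1 + ‖x‖ ^ 2) ^ (m / 2)) / ‖y‖ ^ ((d : ℝ) + 2 * α)) ∧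
      |∫ y : EuclideanSpace ℝ (Fin d),
        ((1 + ‖x + y‖ ^ 2) ^ (m / 2) + (1 + ‖x - y‖ ^ 2) ^ (m / 2)
          - 2 * (1 + ‖x‖ ^ 2) ^ (m / 2)) * ‖y‖ ^ (-(d : ℝ) - 2 * α)|
        ≤ C * (1 + ‖x‖ ^ 2) ^ (m / 2) :=
  stmt_5_general d hd α hα1 m hm0 hm
end

section
/- Let d ≥ 1 be an integer, α ∈ (0,1), γ > d, and define ψ_1 : ℝ^d → ℝ by ψ_1(x) = (1 + |x|²)^{−γ/2}. Then for every x ∈ ℝ^d the function y ↦ (ψ_1(x+y) + ψ_1(x−y) − 2ψ_1(x)) / |y|^{d+2α} is Lebesgue integrable on ℝ^d, and the function F(x) := ∫_{ℝ^d} (ψ_1(x+y) + ψ_1(x−y) − 2ψ_1(x)) |y|^{−d−2α} dy is bounded on ℝ^d. -/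
/-!
Write `ψ z = (1 + ‖z‖²) ^ p` with `p = -γ/2 ≤ 0`. Along a line `t ↦ x + t • y` the second
derivative of `ψ` is at most `(4p² - 6p) ‖y‖²` in absolute value (Cauchy–Schwarz, and
`1 + ‖z‖² ≥ 1`), so the second difference `ψ (x + y) + ψ (x - y) - 2 ψ x` is `O(‖y‖²)` uniformly
in `x`; since `0 ≤ ψ ≤ 1` it is also bounded by `2`. The integrand is therefore dominated,
uniformly in `x`, by `min (A ‖y‖ ^ (2 - d - 2α)) (2 ‖y‖ ^ (-d - 2α))` with `A = 2 (4p² - 6p)`,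
which is integrable because `2 - d - 2α > -d` (near `0`) and `-d - 2α < -d` (near infinity).
-/

open MeasureTheory Metric Set Module RealInnerProductSpace

theorem abs_add_sub_two_mul_le_of_hasDerivAt {f f' f'' : ℝ → ℝ} {M : ℝ}
    (hf : ∀ t, HasDerivAt f (f' t) t) (hf' : ∀ t, HasDerivAt f' (f'' t) t)
    (hM : ∀ t, |f'' t| ≤ M) (h : ℝ) :
    |f h + f (-h) - 2 * f 0| ≤ 2 * M * h ^ 2 := by
  have hf'_lip : ∀ a b, |f' a - f' b| ≤ M * |a - b| := fun a b =>
    convex_univ.norm_image_sub_le_of_norm_hasDerivWithin_le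
      (fun t _ => (hf' t).hasDerivWithinAt) (fun t _ => hM t) (mem_univ b) (mem_univ a)
  have hφ : ∀ t, HasDerivAt (fun s => f s + f (-s)) (f' t - f' (-t)) t := fun t => by
    have := (hf t).add ((hf (-t)).comp t (hasDerivAt_neg t))
    rwa [mul_neg_one, ← sub_eq_add_neg] at this
  have hφ' : ∀ t ∈ closedBall (0 : ℝ) |h|, ‖f' t - f' (-t)‖ ≤ 2 * M * |h| := by
    intro t ht
    rw [mem_closedBall, dist_zero_right, Real.norm_eq_abs] at ht
    have hM0 : 0 ≤ M := (abs_nonneg _).trans (hM 0)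
    calc |f' t - f' (-t)| ≤ M * |t - -t| := hf'_lip t (-t)
      _ = 2 * M * |t| := by rw [sub_neg_eq_add, ← two_mul, abs_mul, abs_two]; ring
      _ ≤ 2 * M * |h| := by gcongr
  have := (convex_closedBall (0 : ℝ) |h|).norm_image_sub_le_of_norm_hasDerivWithin_le
    (fun t _ => (hφ t).hasDerivWithinAt) hφ' (mem_closedBall_self (abs_nonneg h))
    (show h ∈ closedBall (0 : ℝ) |h| by simp)
  simp only [neg_zero, sub_zero, Real.norm_eq_abs] at this
  calc |f h + f (-h) - 2 * f 0| = |f h + f (-h) - (f 0 + f 0)| := by rw [two_mul]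
    _ ≤ 2 * M * |h| * |h| := this
    _ = 2 * M * h ^ 2 := by rw [mul_assoc, abs_mul_abs_self, sq]

section InnerProductSpace

variable {E : Type*} [NormedAddCommGroup E] [InnerProductSpace ℝ E]

theorem hasDerivAt_one_add_norm_sq_line_rpow (p : ℝ) (x y : E) (t : ℝ) :
    HasDerivAt (fun s : ℝ => (1 + ‖x + s • y‖ ^ 2) ^ p)
      (2 * p * ⟪x + t • y, y⟫ * (1 + ‖x + t • y‖ ^ 2) ^ (p - 1)) t := by
  have hline : HasDerivAt (fun s : ℝ => x + s • y) y t := by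
    simpa using ((hasDerivAt_id t).smul_const y).const_add x
  convert (hline.norm_sq.const_add 1).rpow_const (p := p) (Or.inl (by positivity)) using 1
  ring

theorem hasDerivAt_inner_line (x y : E) (t : ℝ) :
    HasDerivAt (fun s : ℝ => ⟪x + s • y, y⟫) (‖y‖ ^ 2) t := by
  simp_rw [inner_add_left, real_inner_smul_left, real_inner_self_eq_norm_sq]
  simpa using ((hasDerivAt_id t).mul_const (‖y‖ ^ 2)).const_add ⟪x, y⟫

theorem abs_one_add_norm_sq_line_rpow_deriv2_le {p : ℝ} (hp : p ≤ 0) (x y : E) (t : ℝ) :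
    |2 * p * ‖y‖ ^ 2 * (1 + ‖x + t • y‖ ^ 2) ^ (p - 1)
        + 4 * p * (p - 1) * ⟪x + t • y, y⟫ ^ 2 * (1 + ‖x + t • y‖ ^ 2) ^ (p - 2)|
      ≤ (4 * p ^ 2 - 6 * p) * ‖y‖ ^ 2 := by
  set z := x + t • y
  set w := 1 + ‖z‖ ^ 2
  have hw : 1 ≤ w := by simp only [w]; nlinarith [sq_nonneg ‖z‖]
  have hw0 : 0 < w := one_pos.trans_le hw
  have hw1 : w ^ (p - 1) ≤ 1 := Real.rpow_le_one_of_one_le_of_nonpos hw (by linarith)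
  have hw2 : w ^ (p - 2) * w = w ^ (p - 1) := by
    rw [← Real.rpow_add_one hw0.ne']; ring_nf
  have hcs : ⟪z, y⟫ ^ 2 ≤ w * ‖y‖ ^ 2 := by
    have := abs_real_inner_le_norm z y
    rw [← sq_abs]
    nlinarith [abs_nonneg ⟪z, y⟫, norm_nonneg z, norm_nonneg y, sq_nonneg ‖y‖]
  have h1 : |2 * p * ‖y‖ ^ 2 * w ^ (p - 1)| ≤ -(2 * p * ‖y‖ ^ 2) := by
    have hneg : 2 * p * ‖y‖ ^ 2 ≤ 0 := by nlinarith [sq_nonneg ‖y‖]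
    rw [abs_mul, abs_of_nonpos hneg, abs_of_nonneg (Real.rpow_nonneg hw0.le _)]
    exact mul_le_of_le_one_right (by linarith) hw1
  have hc : 0 ≤ 4 * p * (p - 1) := by nlinarith
  have h2 : |4 * p * (p - 1) * ⟪z, y⟫ ^ 2 * w ^ (p - 2)| ≤ 4 * p * (p - 1) * ‖y‖ ^ 2 := by
    rw [abs_of_nonneg (by positivity)]
    calc 4 * p * (p - 1) * ⟪z, y⟫ ^ 2 * w ^ (p - 2)
        ≤ 4 * p * (p - 1) * (w * ‖y‖ ^ 2) * w ^ (p - 2) := by gcongr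
      _ = 4 * p * (p - 1) * ‖y‖ ^ 2 * w ^ (p - 1) := by rw [← hw2]; ring
      _ ≤ 4 * p * (p - 1) * ‖y‖ ^ 2 := mul_le_of_le_one_right (by positivity) hw1
  calc _ ≤ _ := abs_add_le _ _
    _ ≤ -(2 * p * ‖y‖ ^ 2) + 4 * p * (p - 1) * ‖y‖ ^ 2 := add_le_add h1 h2
    _ = (4 * p ^ 2 - 6 * p) * ‖y‖ ^ 2 := by ring

theorem abs_one_add_norm_sq_rpow_second_diff_le {p : ℝ} (hp : p ≤ 0) (x y : E) :
    |(1 + ‖x + y‖ ^ 2) ^ p + (1 + ‖x - y‖ ^ 2) ^ p - 2 * (1 + ‖x‖ ^ 2) ^ p|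
      ≤ 2 * (4 * p ^ 2 - 6 * p) * ‖y‖ ^ 2 := by
  have hf' (t : ℝ) := ((hasDerivAt_inner_line x y t).const_mul (2 * p)).mul
    (hasDerivAt_one_add_norm_sq_line_rpow (p - 1) x y t)
  have := abs_add_sub_two_mul_le_of_hasDerivAt (hasDerivAt_one_add_norm_sq_line_rpow p x y)
    (fun t => (hf' t).congr_deriv (by rw [sub_sub, one_add_one_eq_two]; ring))
    (abs_one_add_norm_sq_line_rpow_deriv2_le hp x y) 1
  simpa [← sub_eq_add_neg, mul_assoc] using this

end InnerProductSpace

section HaarMeasure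

variable {E : Type*} [NormedAddCommGroup E] [NormedSpace ℝ E] [FiniteDimensional ℝ E]
  [MeasurableSpace E] [BorelSpace E] {μ : Measure E} [μ.IsAddHaarMeasure]

theorem integrableOn_ball_norm_rpow (hE : 1 ≤ finrank ℝ E) {p : ℝ}
    (hp : -(finrank ℝ E : ℝ) < p) :
    IntegrableOn (fun y : E => ‖y‖ ^ p) (ball 0 1) μ :=
  integrableOn_ball_of_norm_le_rpow (C := 1) (α := -p) hE (by linarith)
    (ae_of_all _ fun y => by simp [abs_of_nonneg (Real.rpow_nonneg (norm_nonneg y) p)])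
    (Measurable.aestronglyMeasurable (by fun_prop))

theorem integrableOn_compl_ball_norm_rpow {p : ℝ} (hp : p < -(finrank ℝ E : ℝ)) :
    IntegrableOn (fun y : E => ‖y‖ ^ p) (ball 0 1)ᶜ μ := by
  have hp0 : p ≤ 0 := hp.le.trans (by simp)
  refine ((integrable_one_add_norm (μ := μ) (r := -p) (by linarith)).const_mul
    (2 ^ (-p))).integrableOn.mono' (Measurable.aestronglyMeasurable (by fun_prop)) ?_
  rw [ae_restrict_iff' measurableSet_ball.compl]
  refine ae_of_all _ fun y hy => ?_
  have hy : 1 ≤ ‖y‖ := by simpa using hy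
  calc ‖‖y‖ ^ p‖ = ‖y‖ ^ p := abs_of_nonneg (by positivity)
    _ ≤ ((1 + ‖y‖) / 2) ^ p := Real.rpow_le_rpow_of_nonpos (by positivity) (by linarith) hp0
    _ = 2 ^ (-p) * (1 + ‖y‖) ^ (-(-p)) := by
        rw [Real.div_rpow (by positivity) zero_le_two, neg_neg, Real.rpow_neg zero_le_two,
          div_eq_inv_mul]

theorem integrable_min_norm_rpow (hE : 1 ≤ finrank ℝ E) {a b A B : ℝ}
    (ha : -(finrank ℝ E : ℝ) < a) (hb : b < -(finrank ℝ E : ℝ)) (hA : 0 ≤ A) (hB : 0 ≤ B) :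
    Integrable (fun y : E => min (A * ‖y‖ ^ a) (B * ‖y‖ ^ b)) μ := by
  have hmeas : AEStronglyMeasurable (fun y : E => min (A * ‖y‖ ^ a) (B * ‖y‖ ^ b)) μ := by
    fun_prop
  have hnorm (y : E) : ‖min (A * ‖y‖ ^ a) (B * ‖y‖ ^ b)‖ = min (A * ‖y‖ ^ a) (B * ‖y‖ ^ b) :=
    abs_of_nonneg (by positivity)
  rw [← integrableOn_univ, ← union_compl_self (ball (0 : E) 1)]
  refine IntegrableOn.union ?_ ?_
  · exact ((integrableOn_ball_norm_rpow hE ha).const_mul A).mono' hmeas.restrict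
      (ae_of_all _ fun y => (hnorm y).trans_le (min_le_left _ _))
  · exact ((integrableOn_compl_ball_norm_rpow hb).const_mul B).mono' hmeas.restrict
      (ae_of_all _ fun y => (hnorm y).trans_le (min_le_right _ _))

end HaarMeasure

theorem abs_div_rpow_le_min {u r s A B : ℝ} (hr : 0 ≤ r) (hs : 0 < s) (hA : 0 ≤ A)
    (huA : |u| ≤ A * r ^ 2) (huB : |u| ≤ B) :
    |u / r ^ s| ≤ min (A * r ^ (2 - s)) (B * r ^ (-s)) := by
  rcases hr.eq_or_lt with rfl | hr
  · simpa [Real.zero_rpow hs.ne', Real.zero_rpow (neg_ne_zero.2 hs.ne')]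
      using mul_nonneg hA (Real.rpow_nonneg le_rfl (2 - s))
  have hrs : 0 < r ^ s := by positivity
  rw [abs_div, abs_of_pos hrs, le_min_iff, Real.rpow_sub hr, Real.rpow_neg hr.le, Real.rpow_two,
    ← mul_div_assoc, ← div_eq_mul_inv]
  exact ⟨by gcongr, by gcongr⟩

theorem stmt_10 (d : ℕ) (hd : 1 ≤ d) (α : ℝ) (hα0 : 0 < α) (hα1 : α < 1)
    (γ : ℝ) (hγ : (d : ℝ) < γ) :
    (∀ x : EuclideanSpace ℝ (Fin d),
      Integrable (fun y : EuclideanSpace ℝ (Fin d) =>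
        ((1 + ‖x + y‖ ^ 2) ^ (-γ / 2) + (1 + ‖x - y‖ ^ 2) ^ (-γ / 2)
          - 2 * (1 + ‖x‖ ^ 2) ^ (-γ / 2)) / ‖y‖ ^ ((d : ℝ) + 2 * α))) ∧
    ∃ C : ℝ, ∀ x : EuclideanSpace ℝ (Fin d),
      |∫ y : EuclideanSpace ℝ (Fin d),
        ((1 + ‖x + y‖ ^ 2) ^ (-γ / 2) + (1 + ‖x - y‖ ^ 2) ^ (-γ / 2)
          - 2 * (1 + ‖x‖ ^ 2) ^ (-γ / 2)) * ‖y‖ ^ (-(d : ℝ) - 2 * α)| ≤ C := by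
  set p := -γ / 2
  set s := (d : ℝ) + 2 * α
  set A := 2 * (4 * p ^ 2 - 6 * p)
  have hp : p ≤ 0 := by simp only [p]; linarith [(d.cast_nonneg : (0 : ℝ) ≤ d)]
  have hA : 0 ≤ A := by simp only [A]; nlinarith
  set g : EuclideanSpace ℝ (Fin d) → ℝ := fun y => min (A * ‖y‖ ^ (2 - s)) (2 * ‖y‖ ^ (-s))
  have hψ (z : EuclideanSpace ℝ (Fin d)) : 0 ≤ (1 + ‖z‖ ^ 2) ^ p ∧ (1 + ‖z‖ ^ 2) ^ p ≤ 1 :=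
    ⟨by positivity, Real.rpow_le_one_of_one_le_of_nonpos (by nlinarith [norm_nonneg z]) hp⟩
  have hkernel (x y : EuclideanSpace ℝ (Fin d)) :
      ‖((1 + ‖x + y‖ ^ 2) ^ p + (1 + ‖x - y‖ ^ 2) ^ p - 2 * (1 + ‖x‖ ^ 2) ^ p) / ‖y‖ ^ s‖
        ≤ g y := by
    refine abs_div_rpow_le_min (norm_nonneg y) (by positivity) hA
      (abs_one_add_norm_sq_rpow_second_diff_le hp x y) (abs_le.2 ⟨?_, ?_⟩)
    all_goals linarith [hψ (x + y), hψ (x - y), hψ x]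
  have hg : Integrable g := integrable_min_norm_rpow (by rwa [finrank_euclideanSpace_fin])
    (by rw [finrank_euclideanSpace_fin]; linarith) (by rw [finrank_euclideanSpace_fin]; linarith)
    hA zero_le_two
  refine ⟨fun x => hg.mono' (Measurable.aestronglyMeasurable (by fun_prop))
    (ae_of_all _ (hkernel x)), ∫ y, g y, fun x => ?_⟩
  have hs : -(d : ℝ) - 2 * α = -s := by ring
  simp_rw [hs, Real.rpow_neg (norm_nonneg _), ← div_eq_mul_inv]
  exact norm_integral_le_of_norm_le hg (ae_of_all _ (hkernel x))
end

section
/- Let d ≥ 1 be an integer, m > 0 and K > 0. Then there exists a constant C > 0, depending only on d, m and K, such that the following holds: for every measurable function v : ℝ^d → [0, ∞) satisfying ∫_{ℝ^d} v(x)(1 + |x|²)^{m/2} dx ≤ K and ∫_{ℝ^d} (v log v)_+ dx ≤ K (with the convention v log v = 0 where v = 0), the function v log v is Lebesgue integrable on ℝ^d and ∫_{ℝ^d} |v(x) log v(x)| dx ≤ C. -/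
open MeasureTheory


-- key pointwise inequality
lemma neg_part_bound (m r t R : ℝ) (hm : 0 < m) (hr : 0 < r) (ht : 0 ≤ t) (hR : 1 ≤ R) :
    max (-(t * Real.log t)) 0 ≤ (2 * r / m) * (t * R ^ (m / 2)) + 2 * R ^ (-r / 2) := by
  have hR0 : (0:ℝ) < R := lt_of_lt_of_le one_pos hR
  have hw0 : (0:ℝ) ≤ R ^ (m/2) := Real.rpow_nonneg hR0.le _
  have hw2 : (0:ℝ) ≤ R ^ (-r/2) := Real.rpow_nonneg hR0.le _
  have hRHS : 0 ≤ (2 * r / m) * (t * R ^ (m / 2)) + 2 * R ^ (-r / 2) := by positivity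
  rcases le_or_gt 0 (t * Real.log t) with hs | hs
  · exact max_le (by linarith) hRHS
  -- now t * log t < 0, so 0 < t
  have ht0 : 0 < t := by
    rcases ht.lt_or_eq with h | h
    · exact h
    · exfalso; rw [← h] at hs; simp at hs
  rw [max_eq_left (by linarith)]
  rcases le_or_gt (R ^ (-r : ℝ)) t with hcase | hcase
  · -- large t case : -log t ≤ r log R
    have hlog : -r * Real.log R ≤ Real.log t := by
      have := Real.log_le_log (Real.rpow_pos_of_pos hR0 _) hcase
      rwa [Real.log_rpow hR0] at this
    have hlogR : Real.log R ≤ (2 / m) * R ^ (m / 2) := by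
      have h1 : Real.log (R ^ (m/2)) ≤ R ^ (m/2) := Real.log_le_self hw0
      rw [Real.log_rpow hR0] at h1
      rw [div_mul_eq_mul_div, le_div_iff₀ hm] at *
      nlinarith
    have hlogR0 : 0 ≤ Real.log R := Real.log_nonneg hR
    have h2 : -(t * Real.log t) ≤ t * (r * Real.log R) := by nlinarith
    have h3 : t * (r * Real.log R) ≤ t * (r * ((2/m) * R ^ (m/2))) := by
      apply mul_le_mul_of_nonneg_left _ ht0.le
      exact mul_le_mul_of_nonneg_left hlogR hr.le
    have : t * (r * ((2/m) * R ^ (m/2))) = (2 * r / m) * (t * R ^ (m/2)) := by ring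
    nlinarith
  · -- small t case : -t log t ≤ 2 √t ≤ 2 R^(-r/2)
    have hs1 : -(t * Real.log t) ≤ 2 * Real.sqrt t := by
      have hst : 0 < Real.sqrt t := Real.sqrt_pos.mpr ht0
      have h1 : Real.log (Real.sqrt t)⁻¹ ≤ (Real.sqrt t)⁻¹ - 1 :=
        Real.log_le_sub_one_of_pos (by positivity)
      rw [Real.log_inv, Real.log_sqrt ht] at h1
      have h2 : -(Real.log t) ≤ 2 * (Real.sqrt t)⁻¹ := by linarith
      have h3 : -(t * Real.log t) = t * (-(Real.log t)) := by ring
      rw [h3]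
      calc t * (-(Real.log t)) ≤ t * (2 * (Real.sqrt t)⁻¹) :=
            mul_le_mul_of_nonneg_left h2 ht0.le
        _ = 2 * Real.sqrt t := by
            field_simp; nlinarith [Real.mul_self_sqrt ht]
    have hs2 : Real.sqrt t ≤ R ^ (-r/2) := by
      have := Real.sqrt_le_sqrt hcase.le
      rwa [show Real.sqrt (R ^ (-r:ℝ)) = R ^ (-r/2) by
        rw [Real.sqrt_eq_rpow, ← Real.rpow_mul hR0.le]
        congr 1; ring] at this
    have hterm : 0 ≤ (2 * r / m) * (t * R ^ (m / 2)) := by positivity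
    linarith

lemma abs_eq_posPart_add_negPart (s : ℝ) : |s| = max s 0 + max (-s) 0 := by
  rcases le_total s 0 with h | h
  · rw [abs_of_nonpos h, max_eq_right h, max_eq_left (by linarith)]; ring
  · rw [abs_of_nonneg h, max_eq_left h, max_eq_right (by linarith)]; ring

theorem stmt_15 (d : ℕ) (hd : 1 ≤ d) (m K : ℝ) (hm : 0 < m) (hK : 0 < K) :
    ∃ C : ℝ, 0 < C ∧
      ∀ v : EuclideanSpace ℝ (Fin d) → ℝ, Measurable v → (∀ x, 0 ≤ v x) →
        (∫⁻ x, ENNReal.ofReal (v x * (1 + ‖x‖ ^ 2) ^ (m / 2)) ≤ ENNReal.ofReal K) →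
        (∫⁻ x, ENNReal.ofReal (max (v x * Real.log (v x)) 0) ≤ ENNReal.ofReal K) →
        Integrable (fun x => v x * Real.log (v x)) ∧
        ∫ x, |v x * Real.log (v x)| ≤ C := by
  set r : ℝ := 2 * (d + 1) with hrdef
  have hr : 0 < r := by positivity
  -- integrability of the fixed weight
  have hfinrank : ((Module.finrank ℝ (EuclideanSpace ℝ (Fin d)) : ℝ)) < r := by
    simp only [finrank_euclideanSpace, Fintype.card_fin, hrdef]
    push_cast; linarith
  have hG : Integrable (fun x : EuclideanSpace ℝ (Fin d) => ((1:ℝ) + ‖x‖ ^ 2) ^ (-r / 2)) :=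
    integrable_rpow_neg_one_add_norm_sq hfinrank
  set CG : ℝ := ∫ x : EuclideanSpace ℝ (Fin d), ((1:ℝ) + ‖x‖ ^ 2) ^ (-r / 2) with hCG
  have hCG0 : 0 ≤ CG := integral_nonneg fun x => Real.rpow_nonneg (by positivity) _
  have hCpos : 0 < K + (2 * r / m) * K + 2 * CG := by
    have h1 : 0 ≤ (2 * r / m) * K := by positivity
    linarith
  refine ⟨K + (2 * r / m) * K + 2 * CG, hCpos, ?_⟩
  intro v hv hv0 hmom hent
  have hR1 : ∀ x : EuclideanSpace ℝ (Fin d), (1:ℝ) ≤ 1 + ‖x‖ ^ 2 := fun x => by nlinarith [sq_nonneg ‖x‖]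
  -- continuity/measurability of the weight
  have hwmeas : Measurable fun x : EuclideanSpace ℝ (Fin d) => ((1:ℝ) + ‖x‖ ^ 2) ^ (m / 2) := by
    fun_prop
  have hvw_meas : Measurable fun x => v x * ((1:ℝ) + ‖x‖ ^ 2) ^ (m / 2) := hv.mul hwmeas
  have hvw_pos : ∀ x, 0 ≤ v x * ((1:ℝ) + ‖x‖ ^ 2) ^ (m / 2) := fun x =>
    mul_nonneg (hv0 x) (Real.rpow_nonneg (by positivity) _)
  -- integrability of the moment function
  have hF : Integrable (fun x => v x * ((1:ℝ) + ‖x‖ ^ 2) ^ (m / 2)) := by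
    refine ⟨hvw_meas.aestronglyMeasurable, ?_⟩
    rw [hasFiniteIntegral_iff_ofReal (ae_of_all _ hvw_pos)]
    exact lt_of_le_of_lt hmom ENNReal.ofReal_lt_top
  have hFint : ∫ x, v x * ((1:ℝ) + ‖x‖ ^ 2) ^ (m / 2) ≤ K := by
    rw [integral_eq_lintegral_of_nonneg_ae (ae_of_all _ hvw_pos) hvw_meas.aestronglyMeasurable]
    exact ENNReal.toReal_le_of_le_ofReal hK.le hmom
  -- the positive part
  set P : EuclideanSpace ℝ (Fin d) → ℝ := fun x => max (v x * Real.log (v x)) 0 with hPdef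
  have hPmeas : Measurable P := ((hv.mul (Real.measurable_log.comp hv)).max measurable_const)
  have hPpos : ∀ x, 0 ≤ P x := fun x => le_max_right _ _
  have hP : Integrable P := by
    refine ⟨hPmeas.aestronglyMeasurable, ?_⟩
    rw [hasFiniteIntegral_iff_ofReal (ae_of_all _ hPpos)]
    exact lt_of_le_of_lt hent ENNReal.ofReal_lt_top
  have hPint : ∫ x, P x ≤ K := by
    rw [integral_eq_lintegral_of_nonneg_ae (ae_of_all _ hPpos) hPmeas.aestronglyMeasurable]
    exact ENNReal.toReal_le_of_le_ofReal hK.le hent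
  -- the negative part
  set N : EuclideanSpace ℝ (Fin d) → ℝ := fun x => max (-(v x * Real.log (v x))) 0 with hNdef
  have hNmeas : Measurable N := ((hv.mul (Real.measurable_log.comp hv)).neg.max measurable_const)
  have hNpos : ∀ x, 0 ≤ N x := fun x => le_max_right _ _
  -- dominating function
  set g : EuclideanSpace ℝ (Fin d) → ℝ := fun x =>
    (2 * r / m) * (v x * ((1:ℝ) + ‖x‖ ^ 2) ^ (m / 2)) + 2 * ((1:ℝ) + ‖x‖ ^ 2) ^ (-r / 2)
    with hgdef
  have hg : Integrable g := ((hF.const_mul _).add (hG.const_mul 2))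
  have hNg : ∀ x, N x ≤ g x := fun x =>
    neg_part_bound m r (v x) (1 + ‖x‖ ^ 2) hm hr (hv0 x) (hR1 x)
  have hN : Integrable N := by
    refine hg.mono' hNmeas.aestronglyMeasurable (ae_of_all _ fun x => ?_)
    rw [Real.norm_eq_abs, abs_of_nonneg (hNpos x)]
    exact hNg x
  have hNint : ∫ x, N x ≤ (2 * r / m) * K + 2 * CG := by
    calc ∫ x, N x ≤ ∫ x, g x := integral_mono hN hg hNg
      _ = (2 * r / m) * (∫ x, v x * ((1:ℝ) + ‖x‖ ^ 2) ^ (m / 2)) + 2 * CG := by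
          rw [hgdef]
          rw [integral_add (hF.const_mul _) (hG.const_mul 2),
            integral_const_mul, integral_const_mul]
      _ ≤ (2 * r / m) * K + 2 * CG := by
          have : 0 ≤ 2 * r / m := by positivity
          nlinarith
  -- conclude
  have hsum : (fun x => v x * Real.log (v x)) = fun x => P x - N x := by
    funext x
    rcases le_total (v x * Real.log (v x)) 0 with h | h
    · simp only [hPdef, hNdef]; rw [max_eq_right h, max_eq_left (by linarith)]; ring
    · simp only [hPdef, hNdef]; rw [max_eq_left h, max_eq_right (by linarith)]; ring
  have hInt : Integrable (fun x => v x * Real.log (v x)) := by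
    rw [hsum]; exact hP.sub hN
  refine ⟨hInt, ?_⟩
  calc ∫ x, |v x * Real.log (v x)| = ∫ x, (P x + N x) := by
        apply integral_congr_ae
        exact ae_of_all _ fun x => abs_eq_posPart_add_negPart _
    _ = (∫ x, P x) + ∫ x, N x := integral_add hP hN
    _ ≤ K + ((2 * r / m) * K + 2 * CG) := add_le_add hPint hNint
    _ = K + (2 * r / m) * K + 2 * CG := by ring
end
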